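/- If a sequence of complex numbers (a_k) satisfies ∑_{n≥1} (√(∑_{k≥n} |a_k|²))/n^{1-γ/2} < ∞ for some γ ∈ (0,1), then ∑_{k≥1} 2^{γk/2} (∑_{l=2^k+1}^{2^{k+1}} |a_l|²)^{1/2} < ∞. -/

import Mathlib

open Finset Real

/-!
The sequence `√(∑_{k ≥ n} |a_k|²) / n^{1-γ/2}` is antitone, so by Cauchy condensation
`∑_k 2^k · √(∑_{l ≥ 2^k} |a_l|²) / 2^{k(1-γ/2)} = ∑_k 2^{γk/2} √(∑_{l ≥ 2^k} |a_l|²)` converges,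
and the dyadic block sum over `2^k < l ≤ 2^{k+1}` is bounded by the tail sum from `2^k`.
-/

section TailSum

variable {f : ℕ → ℝ}

lemma antitone_tsum_ge (hf0 : 0 ≤ f) (hf : Summable f) :
    Antitone fun n => ∑' k : {k : ℕ // n ≤ k}, f k := by
  intro m n hmn
  calc ∑' k : {k : ℕ // n ≤ k}, f k = ∑' k, (Set.Ici n).indicator f k := _root_.tsum_subtype _ f
    _ ≤ ∑' k, (Set.Ici m).indicator f k := (hf.indicator _).tsum_le_tsum
        (Set.indicator_le_indicator_of_subset (Set.Ici_subset_Ici.2 hmn) hf0) (hf.indicator _)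
    _ = ∑' k : {k : ℕ // m ≤ k}, f k := (_root_.tsum_subtype _ f).symm

lemma sum_le_tsum_ge (hf0 : 0 ≤ f) (hf : Summable f) {s : Finset ℕ} {n : ℕ}
    (hs : ∀ l ∈ s, n ≤ l) : ∑ l ∈ s, f l ≤ ∑' k : {k : ℕ // n ≤ k}, f k := by
  rw [← Finset.sum_subtype_of_mem f hs]
  exact (hf.subtype _).sum_le_tsum _ (fun k _ => hf0 k)

end TailSum

lemma div_rpow_le_div_rpow {u : ℕ → ℝ} (hu : Antitone u) (hu0 : 0 ≤ u) {s : ℝ} (hs : 0 ≤ s)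
    ⦃m n : ℕ⦄ (hm : 0 < m) (hmn : m ≤ n) : u n / (n : ℝ) ^ s ≤ u m / (m : ℝ) ^ s :=
  div_le_div₀ (hu0 m) (hu hmn) (by positivity) (by gcongr)

lemma mul_div_rpow_one_sub {x : ℝ} (hx : 0 < x) (p c : ℝ) : x * (c / x ^ (1 - p)) = x ^ p * c := by
  rw [Real.rpow_sub hx, Real.rpow_one]
  field_simp

theorem stmt_3_general (γ : ℝ) (hγ1 : γ < 1) (a : ℕ → ℂ)
    (hsq : Summable fun k => ‖a k‖ ^ 2)
    (h : Summable fun n : ℕ =>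
      Real.sqrt (∑' k : {k : ℕ // n ≤ k}, ‖a k.1‖ ^ 2) / (n : ℝ) ^ (1 - γ / 2)) :
    Summable fun k : ℕ =>
      (2 : ℝ) ^ (γ * k / 2) *
        Real.sqrt (∑ l ∈ Finset.Icc (2 ^ k + 1) (2 ^ (k + 1)), ‖a l‖ ^ 2) := by
  set T : ℕ → ℝ := fun n => ∑' k : {k : ℕ // n ≤ k}, ‖a k.1‖ ^ 2
  have hsq0 : 0 ≤ fun k => ‖a k‖ ^ 2 := fun k => sq_nonneg _
  have hT : Antitone T := antitone_tsum_ge hsq0 hsq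
  have hcond : Summable fun k : ℕ =>
      (2 : ℝ) ^ k * (√(T (2 ^ k)) / ((2 ^ k : ℕ) : ℝ) ^ (1 - γ / 2)) :=
    (summable_condensed_iff_of_nonneg (fun n => by positivity)
      (div_rpow_le_div_rpow (fun m n hmn => Real.sqrt_le_sqrt (hT hmn)) (fun n => by positivity)
        (by linarith))).2 h
  refine hcond.of_nonneg_of_le (fun k => by positivity) fun k => ?_
  have hterm : (2 : ℝ) ^ k * (√(T (2 ^ k)) / ((2 ^ k : ℕ) : ℝ) ^ (1 - γ / 2)) =
      (2 : ℝ) ^ (γ * k / 2) * √(T (2 ^ k)) := by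
    rw [Nat.cast_pow, Nat.cast_ofNat, mul_div_rpow_one_sub (by positivity),
      ← Real.rpow_natCast_mul zero_le_two]
    ring_nf
  rw [hterm]
  gcongr
  exact sum_le_tsum_ge hsq0 hsq fun l hl => by linarith [(Finset.mem_Icc.1 hl).1]

theorem stmt_3 (γ : ℝ) (hγ : 0 < γ) (hγ1 : γ < 1) (a : ℕ → ℂ)
    (hsq : Summable fun k => ‖a k‖ ^ 2)
    (h : Summable fun n : ℕ =>
      Real.sqrt (∑' k : {k : ℕ // n ≤ k}, ‖a k.1‖ ^ 2) / (n : ℝ) ^ (1 - γ / 2)) :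
    Summable fun k : ℕ =>
      (2 : ℝ) ^ (γ * k / 2) *
        Real.sqrt (∑ l ∈ Finset.Icc (2 ^ k + 1) (2 ^ (k + 1)), ‖a l‖ ^ 2) :=
  stmt_3_general γ hγ1 a hsq h
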